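/- Let Γ and Δ be finitely generated groups whose profinite completions are isomorphic as topological groups. Then the abelianizations of Γ and Δ are isomorphic. -/

import Mathlib

/-- The index type of finite-index normal subgroups of `G`. -/
def FinIndexNormalSubgroup (G : Type*) [Group G] :=
  {N : Subgroup G // N.Normal ∧ N.FiniteIndex}

instance {G : Type*} [Group G] (N : FinIndexNormalSubgroup G) : N.1.Normal := N.2.1
instance {G : Type*} [Group G] (N : FinIndexNormalSubgroup G) : N.1.FiniteIndex := N.2.2

/-- Each finite quotient carries the discrete topology. -/
instance {G : Type*} [Group G] (N : FinIndexNormalSubgroup G) :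
    TopologicalSpace (G ⧸ N.1) := ⊥

/-- The profinite completion of `G`, realized as the inverse limit of the finite
quotients `G ⧸ N` over all finite-index normal subgroups `N`, sitting inside the
product `∀ N, G ⧸ N` (which carries the product of the discrete topologies). -/
def profiniteCompletion (G : Type*) [Group G] :
    Subgroup (∀ N : FinIndexNormalSubgroup G, G ⧸ N.1) where
  carrier := {x | ∀ (N M : FinIndexNormalSubgroup G) (h : N.1 ≤ M.1),
    QuotientGroup.map N.1 M.1 (MonoidHom.id G) h (x N) = x M}
  one_mem' := by intro N M h; simp
  mul_mem' := by
    intro x y hx hy N M h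
    simp only [Pi.mul_apply, map_mul, hx N M h, hy N M h]
  inv_mem' := by
    intro x hx N M h
    simp only [Pi.inv_apply, map_inv, hx N M h]

/-! Homomorphisms from `Γ` to a finite group are the same as continuous homomorphisms from `Γ̂`,
because `Γ` is dense in `Γ̂` and a homomorphism to a finite group factors through a finite quotient.
Hence `Γᵃᵇ` and `Δᵃᵇ` have the same number of homomorphisms to every `ℤ/n`. Writing a finitely
generated abelian group as `⨁ ℤ/qᵢ` with each `qᵢ` zero or a prime power, that number is
`∏ gcd(qᵢ, n)`. These counts determine the multiplicity of every `q ≠ 1`: the ratio of the values at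
`p^(j+1)` and `p^j` is `p` raised to the number of `qᵢ` divisible by `p^(j+1)`, and a prime larger
than every nonzero `qᵢ` divides exactly the `qᵢ = 0`. -/

open Finset
open scoped DirectSum

namespace FinIndexNormalSubgroup

variable {G : Type*} [Group G]

def iInf (I : Finset (FinIndexNormalSubgroup G)) : FinIndexNormalSubgroup G :=
  ⟨⨅ N : I, N.1.1, Subgroup.normal_iInf_normal fun N => N.1.2.1,
    Subgroup.finiteIndex_iInf fun N => N.1.2.2⟩

def ker {A : Type*} [Group A] [Finite A] (φ : G →* A) : FinIndexNormalSubgroup G :=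
  ⟨φ.ker, inferInstance, Subgroup.finiteIndex_ker φ⟩

instance (N : FinIndexNormalSubgroup G) : DiscreteTopology (G ⧸ N.1) := ⟨rfl⟩

end FinIndexNormalSubgroup

namespace profiniteCompletion

variable {G : Type*} [Group G]

variable (G) in
def of : G →* profiniteCompletion G where
  toFun g := ⟨fun N => (g : G ⧸ N.1), fun _ _ _ => rfl⟩
  map_one' := rfl
  map_mul' _ _ := rfl

lemma exists_of_apply_eq (x : profiniteCompletion G) (I : Finset (FinIndexNormalSubgroup G)) :
    ∃ g : G, ∀ N ∈ I, (of G g).1 N = x.1 N := by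
  obtain ⟨g, hg⟩ := QuotientGroup.mk_surjective (x.1 (.iInf I))
  refine ⟨g, fun N hN => ?_⟩
  rw [← x.2 (.iInf I) N (iInf_le (fun N : I => N.1.1) ⟨N, hN⟩), ← hg]
  rfl

lemma denseRange_of : DenseRange (of G) := by
  intro x
  rw [mem_closure_iff]
  intro o ho hxo
  obtain ⟨U, hU, rfl⟩ := isOpen_induced_iff.mp ho
  obtain ⟨I, u, hu, hIU⟩ := isOpen_pi_iff.mp hU x.1 hxo
  obtain ⟨g, hg⟩ := exists_of_apply_eq x I
  exact ⟨of G g, hIU fun N hN => hg N hN ▸ (hu N hN).2, g, rfl⟩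

lemma hom_ext {M : Type*} [Monoid M] [TopologicalSpace M] [T2Space M]
    {f f' : profiniteCompletion G →ₜ* M} (h : ∀ g, f (of G g) = f' (of G g)) : f = f' :=
  ContinuousMonoidHom.ext <| congrFun <|
    denseRange_of.equalizer f.continuous f'.continuous (funext h)

variable {A : Type*} [Group A] [TopologicalSpace A]

noncomputable def lift [Finite A] (φ : G →* A) : profiniteCompletion G →ₜ* A where
  toMonoidHom := (QuotientGroup.kerLift φ).comp
    ((Pi.evalMonoidHom (fun N : FinIndexNormalSubgroup G => G ⧸ N.1) (.ker φ)).comp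
      (profiniteCompletion G).subtype)
  continuous_toFun :=
    (continuous_of_discreteTopology (α := G ⧸ (FinIndexNormalSubgroup.ker φ).1)).comp
      ((continuous_apply _).comp continuous_subtype_val)

@[simp]
lemma lift_of [Finite A] (φ : G →* A) (g : G) : lift φ (of G g) = φ g :=
  QuotientGroup.kerLift_mk φ g

variable (A) in
noncomputable def homEquiv [Finite A] [T2Space A] : (G →* A) ≃ (profiniteCompletion G →ₜ* A) where
  toFun := lift
  invFun f := f.toMonoidHom.comp (of G)
  left_inv φ := MonoidHom.ext (lift_of φ)
  right_inv _ := hom_ext (lift_of _)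

end profiniteCompletion

def ContinuousMulEquiv.continuousMonoidHomCongrLeft {X Y A : Type*} [Monoid X] [Monoid Y]
    [Monoid A] [TopologicalSpace X] [TopologicalSpace Y] [TopologicalSpace A] (e : X ≃ₜ* Y) :
    (X →ₜ* A) ≃ (Y →ₜ* A) where
  toFun f := f.comp e.symm
  invFun f := f.comp e
  left_inv _ := by ext; simp
  right_inv _ := by ext; simp

lemma card_monoidHom_eq_of_continuousMulEquiv {Γ Δ : Type*} [Group Γ] [Group Δ]
    (e : profiniteCompletion Γ ≃ₜ* profiniteCompletion Δ) (A : Type*) [Group A] [Finite A] :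
    Nat.card (Γ →* A) = Nat.card (Δ →* A) := by
  let : TopologicalSpace A := ⊥
  have : DiscreteTopology A := ⟨rfl⟩
  exact Nat.card_congr <| (profiniteCompletion.homEquiv A).trans <|
    e.continuousMonoidHomCongrLeft.trans (profiniteCompletion.homEquiv A).symm

lemma Nat.gcd_prime_pow_succ (q : ℕ) {p : ℕ} (hp : p.Prime) (j : ℕ) :
    q.gcd (p ^ (j + 1)) = q.gcd (p ^ j) * if p ^ (j + 1) ∣ q then p else 1 := by
  split_ifs with h
  · rw [Nat.gcd_eq_right h, Nat.gcd_eq_right ((pow_dvd_pow p j.le_succ).trans h), pow_succ]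
  · rw [mul_one]
    obtain ⟨k, hk, hgcd⟩ := (Nat.dvd_prime_pow hp).mp (Nat.gcd_dvd_right q (p ^ (j + 1)))
    have hkj : k ≤ j := by
      refine Nat.le_of_lt_succ (lt_of_le_of_ne hk fun hk' => h ?_)
      have hdvd := Nat.gcd_dvd_left q (p ^ (j + 1))
      rwa [hgcd, hk'] at hdvd
    refine Nat.dvd_antisymm ?_ (Nat.gcd_dvd_gcd_of_dvd_right q (pow_dvd_pow p j.le_succ))
    exact Nat.dvd_gcd (Nat.gcd_dvd_left _ _) (hgcd ▸ pow_dvd_pow p hkj)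

lemma Nat.prod_gcd_prime_pow_succ {ι : Type*} [Fintype ι] (q : ι → ℕ) {p : ℕ} (hp : p.Prime)
    (j : ℕ) :
    ∏ i, (q i).gcd (p ^ (j + 1)) = (∏ i, (q i).gcd (p ^ j)) * p ^ #{i | p ^ (j + 1) ∣ q i} := by
  simp only [Nat.gcd_prime_pow_succ _ hp, prod_mul_distrib, prod_ite, prod_const_one, mul_one,
    prod_const]

lemma Nat.eq_prime_pow_succ_iff {q p : ℕ} (hq : q ≤ 1 ∨ IsPrimePow q) (hp : p.Prime) (j : ℕ) :
    q = p ^ (j + 1) ↔ p ^ (j + 1) ∣ q ∧ ¬ p ^ (j + 2) ∣ q := by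
  constructor
  · rintro rfl
    exact ⟨dvd_rfl, (Nat.pow_dvd_pow_iff_le_right hp.one_lt).not.mpr (by omega)⟩
  rintro ⟨hdvd, hndvd⟩
  rcases hq with hq | hq
  · interval_cases q
    · exact absurd (dvd_zero _) hndvd
    · exact absurd (Nat.le_of_dvd one_pos hdvd) (Nat.one_lt_pow j.succ_ne_zero hp.one_lt).not_ge
  · obtain ⟨p', e, hp', -, rfl⟩ := (isPrimePow_nat_iff q).mp hq
    have hpp' : p = p' := (Nat.prime_dvd_prime_iff_eq hp hp').mp
      (hp.dvd_of_dvd_pow ((dvd_pow_self p j.succ_ne_zero).trans hdvd))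
    subst hpp'
    rw [Nat.pow_dvd_pow_iff_le_right hp.one_lt] at hdvd hndvd
    rw [show e = j + 1 by omega]

lemma Finset.card_filter_eq_zero_eq_card_filter_dvd {ι : Type*} [Fintype ι] (q : ι → ℕ) {P : ℕ}
    (hP : ∀ i, q i < P) : #{i | q i = 0} = #{i | P ∣ q i} := by
  congr 1
  exact filter_congr fun i _ =>
    ⟨fun h => h ▸ dvd_zero P, fun h => Nat.eq_zero_of_dvd_of_lt h (hP i)⟩

lemma Finset.card_filter_eq_prime_pow_succ_add {ι : Type*} [Fintype ι] {q : ι → ℕ}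
    (hq : ∀ i, q i ≤ 1 ∨ IsPrimePow (q i)) {p : ℕ} (hp : p.Prime) (j : ℕ) :
    #{i | q i = p ^ (j + 1)} + #{i | p ^ (j + 2) ∣ q i} = #{i | p ^ (j + 1) ∣ q i} := by
  rw [← card_filter_add_card_filter_not (s := {i | p ^ (j + 1) ∣ q i}) (p ^ (j + 2) ∣ q ·),
    filter_filter, filter_filter, add_comm]
  congr 2
  · exact filter_congr fun i _ =>
      ⟨fun h => ⟨(pow_dvd_pow p (by omega)).trans h, h⟩, And.right⟩
  · exact filter_congr fun i _ => Nat.eq_prime_pow_succ_iff (hq i) hp j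

section Multiplicities

variable {ι₁ ι₂ : Type*} [Fintype ι₁] [Fintype ι₂] {q₁ : ι₁ → ℕ} {q₂ : ι₂ → ℕ}

lemma card_prime_pow_dvd_eq_of_prod_gcd_eq
    (H : ∀ n ≠ 0, ∏ i, (q₁ i).gcd n = ∏ i, (q₂ i).gcd n) {p : ℕ} (hp : p.Prime) (j : ℕ) :
    #{i | p ^ (j + 1) ∣ q₁ i} = #{i | p ^ (j + 1) ∣ q₂ i} := by
  have hne : ∏ i, (q₂ i).gcd (p ^ j) ≠ 0 :=
    prod_ne_zero_iff.mpr fun i _ => Nat.gcd_ne_zero_right (pow_ne_zero j hp.ne_zero)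
  have h := H (p ^ (j + 1)) (pow_ne_zero _ hp.ne_zero)
  rw [Nat.prod_gcd_prime_pow_succ q₁ hp, Nat.prod_gcd_prime_pow_succ q₂ hp,
    H (p ^ j) (pow_ne_zero _ hp.ne_zero)] at h
  exact Nat.pow_right_injective hp.two_le (mul_left_cancel₀ hne h)

lemma card_filter_eq_of_prod_gcd_eq (hq₁ : ∀ i, q₁ i ≤ 1 ∨ IsPrimePow (q₁ i))
    (hq₂ : ∀ i, q₂ i ≤ 1 ∨ IsPrimePow (q₂ i))
    (H : ∀ n ≠ 0, ∏ i, (q₁ i).gcd n = ∏ i, (q₂ i).gcd n) {v : ℕ} (hv : v ≠ 1) :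
    #{i | q₁ i = v} = #{i | q₂ i = v} := by
  by_cases hv' : v ≤ 1 ∨ IsPrimePow v
  swap
  · rw [filter_false_of_mem fun i _ (h : q₁ i = v) => hv' (h ▸ hq₁ i),
      filter_false_of_mem fun i _ (h : q₂ i = v) => hv' (h ▸ hq₂ i), card_empty, card_empty]
  rcases hv' with hv' | hv'
  · obtain rfl : v = 0 := by omega
    obtain ⟨P, hP, hPrime⟩ := Nat.exists_infinite_primes (∑ i, q₁ i + ∑ i, q₂ i + 1)
    have hlt₁ (i : ι₁) : q₁ i < P := by
      have := single_le_sum (fun i _ => Nat.zero_le (q₁ i)) (mem_univ i); omega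
    have hlt₂ (i : ι₂) : q₂ i < P := by
      have := single_le_sum (fun i _ => Nat.zero_le (q₂ i)) (mem_univ i); omega
    rw [card_filter_eq_zero_eq_card_filter_dvd q₁ hlt₁,
      card_filter_eq_zero_eq_card_filter_dvd q₂ hlt₂, ← pow_one P]
    exact card_prime_pow_dvd_eq_of_prod_gcd_eq H hPrime 0
  · obtain ⟨p, k, hp, hk, rfl⟩ := (isPrimePow_nat_iff v).mp hv'
    obtain ⟨j, rfl⟩ : ∃ j, k = j + 1 := ⟨k - 1, by omega⟩
    have h₁ := card_filter_eq_prime_pow_succ_add hq₁ hp j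
    have h₂ := card_filter_eq_prime_pow_succ_add hq₂ hp j
    have hj := card_prime_pow_dvd_eq_of_prod_gcd_eq H hp j
    have hj' : #{i | p ^ (j + 2) ∣ q₁ i} = #{i | p ^ (j + 2) ∣ q₂ i} :=
      card_prime_pow_dvd_eq_of_prod_gcd_eq H hp (j + 1)
    omega

end Multiplicities

lemma ZMod.card_addMonoidHom (a : ℕ) {b : ℕ} (hb : b ≠ 0) :
    Nat.card (ZMod a →+ ZMod b) = a.gcd b := by
  have : NeZero b := ⟨hb⟩
  have torsion : (ZMod a →+ ZMod b) ≃ (nsmulAddMonoidHom (α := ZMod b) a).ker :=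
    (ZMod.lift a).symm.trans <| (zmultiplesHom (ZMod b)).symm.subtypeEquiv fun f => by
      rw [AddMonoidHom.mem_ker, ← nsmul_one, map_nsmul]
      rfl
  rw [Nat.card_congr torsion, IsAddCyclic.card_nsmulAddMonoidHom_ker, Nat.card_zmod, Nat.gcd_comm]

lemma DirectSum.card_addMonoidHom_zmod {ι : Type*} [Fintype ι] [DecidableEq ι] (q : ι → ℕ)
    {n : ℕ} (hn : n ≠ 0) : Nat.card ((⨁ i, ZMod (q i)) →+ ZMod n) = ∏ i, (q i).gcd n := by
  rw [Nat.card_congr (α := (⨁ i, ZMod (q i)) →+ ZMod n) DFinsupp.liftAddHom.symm.toEquiv,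
    Nat.card_pi]
  exact prod_congr rfl fun i _ => ZMod.card_addMonoidHom (q i) hn

lemma DirectSum.nonempty_addEquiv_zmod_of_card_filter_eq {ι₁ ι₂ : Type} [Fintype ι₁]
    [Fintype ι₂] {q₁ : ι₁ → ℕ} {q₂ : ι₂ → ℕ}
    (h : ∀ v ≠ 1, #{i | q₁ i = v} = #{i | q₂ i = v}) :
    Nonempty ((⨁ i, ZMod (q₁ i)) ≃+ ⨁ i, ZMod (q₂ i)) := by
  classical
  have fiberEquiv (v : ℕ) :
      (⨁ i : {i // q₁ i = v}, ZMod (q₁ i)) ≃+ ⨁ i : {i // q₂ i = v}, ZMod (q₂ i) := by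
    by_cases hv : v = 1
    · subst hv
      have (i : {i // q₁ i = 1}) : Subsingleton (ZMod (q₁ i)) := by rw [i.2]; infer_instance
      have (i : {i // q₂ i = 1}) : Subsingleton (ZMod (q₂ i)) := by rw [i.2]; infer_instance
      exact AddEquiv.ofUnique
    · let σ : {i // q₁ i = v} ≃ {i // q₂ i = v} := Fintype.equivOfCardEq <| by
        rw [Fintype.card_subtype, Fintype.card_subtype, h v hv]
      exact (DirectSum.equivCongrLeft σ).trans <| DFinsupp.mapRange.addEquiv fun k =>
        (ZMod.ringEquivCongr (by rw [(σ.symm k).2, k.2])).toAddEquiv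
  exact ⟨(DirectSum.sigmaFiberAddEquiv (β := fun i => ZMod (q₁ i)) q₁).trans <|
    (DFinsupp.mapRange.addEquiv fiberEquiv).trans
      (DirectSum.sigmaFiberAddEquiv (β := fun i => ZMod (q₂ i)) q₂).symm⟩

/-- Since `ZMod 0 = ℤ`, the free part appears as summands with `q i = 0`. -/
lemma AddCommGroup.exists_addEquiv_directSum_zmod (A : Type*) [AddCommGroup A]
    [AddGroup.FG A] : ∃ (ι : Type) (_ : Fintype ι) (q : ι → ℕ),
      (∀ i, q i ≤ 1 ∨ IsPrimePow (q i)) ∧ Nonempty (A ≃+ ⨁ i, ZMod (q i)) := by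
  classical
  obtain ⟨r, ι, _, p, hp, e, ⟨f⟩⟩ := equiv_free_prod_directSum_zmod A
  let q : Fin r ⊕ ι → ℕ := Sum.elim (fun _ => 0) fun i => p i ^ e i
  refine ⟨Fin r ⊕ ι, inferInstance, q, ?_, ⟨f.trans ?_⟩⟩
  · rintro (i | i)
    · exact Or.inl zero_le_one
    · rcases (e i).eq_zero_or_pos with he | he
      · exact Or.inl (by simp [q, he])
      · exact Or.inr ((hp i).prime.isPrimePow.pow he.ne')
  · exact (((Finsupp.linearEquivFunOnFinite ℤ ℤ (Fin r)).prodCongr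
      (DirectSum.linearEquivFunOnFintype ℤ ι fun i => ZMod (p i ^ e i))).trans <|
      (LinearEquiv.sumPiEquivProdPi ℤ (Fin r) ι fun i => ZMod (q i)).symm.trans
        (DirectSum.linearEquivFunOnFintype ℤ _ _).symm).toAddEquiv

theorem AddCommGroup.nonempty_addEquiv_of_card_addMonoidHom_zmod_eq {A B : Type*}
    [AddCommGroup A] [AddCommGroup B] [AddGroup.FG A] [AddGroup.FG B]
    (h : ∀ n ≠ 0, Nat.card (A →+ ZMod n) = Nat.card (B →+ ZMod n)) : Nonempty (A ≃+ B) := by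
  classical
  obtain ⟨ι₁, _, q₁, hq₁, ⟨f₁⟩⟩ := exists_addEquiv_directSum_zmod A
  obtain ⟨ι₂, _, q₂, hq₂, ⟨f₂⟩⟩ := exists_addEquiv_directSum_zmod B
  have H (n : ℕ) (hn : n ≠ 0) : ∏ i, (q₁ i).gcd n = ∏ i, (q₂ i).gcd n := by
    rw [← DirectSum.card_addMonoidHom_zmod q₁ hn, ← DirectSum.card_addMonoidHom_zmod q₂ hn,
      ← Nat.card_congr f₁.addMonoidHomCongrLeft.toEquiv,
      ← Nat.card_congr f₂.addMonoidHomCongrLeft.toEquiv, h n hn]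
  obtain ⟨g⟩ := DirectSum.nonempty_addEquiv_zmod_of_card_filter_eq fun v hv =>
    card_filter_eq_of_prod_gcd_eq hq₁ hq₂ H hv
  exact ⟨(f₁.trans g).trans f₂.symm⟩

lemma Abelianization.card_addMonoidHom_additive (G : Type*) [Group G] (C : Type*)
    [AddCommGroup C] :
    Nat.card (Additive (Abelianization G) →+ C) = Nat.card (G →* Multiplicative C) :=
  Nat.card_congr (MonoidHom.toAdditiveLeft.symm.trans Abelianization.lift.symm)

theorem profinite_iso_implies_abelianization_iso
    (Γ Δ : Type*) [Group Γ] [Group Δ] (hΓ : Group.FG Γ) (hΔ : Group.FG Δ)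
    (e : ↥(profiniteCompletion Γ) ≃* ↥(profiniteCompletion Δ))
    (he : Continuous e) (he' : Continuous e.symm) :
    Nonempty (Abelianization Γ ≃* Abelianization Δ) := by
  have : Group.FG (Abelianization Γ) := QuotientGroup.fg _
  have : Group.FG (Abelianization Δ) := QuotientGroup.fg _
  let e' : profiniteCompletion Γ ≃ₜ* profiniteCompletion Δ :=
    { e with continuous_toFun := he, continuous_invFun := he' }
  have hcard (n : ℕ) (hn : n ≠ 0) : Nat.card (Additive (Abelianization Γ) →+ ZMod n) =
      Nat.card (Additive (Abelianization Δ) →+ ZMod n) := by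
    have : NeZero n := ⟨hn⟩
    rw [Abelianization.card_addMonoidHom_additive, Abelianization.card_addMonoidHom_additive]
    exact card_monoidHom_eq_of_continuousMulEquiv e' _
  obtain ⟨E⟩ := AddCommGroup.nonempty_addEquiv_of_card_addMonoidHom_zmod_eq hcard
  exact ⟨MulEquiv.toAdditive.symm E⟩
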